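/- arXiv:2405.08778 — 3 statements merged into one kernel-verified Lean document; each statement's English description precedes it below -/
import Mathlib

section
/- In the Heun three-term recurrence A_i c_{i+1} − (B_i + q)c_i + C_i c_{i−1} = 0 with C_i = (i−1+α)(i−1+β), if α = −d for a non-negative integer d and no c_i with i ≤ d forces division by zero (i.e. A_i ≠ 0 for i ≤ d), then there exist values of q for which the sequence (c_i) satisfies c_i = 0 for all i > d, so the series solution is a polynomial of degree at most d. -/
/-!
Solve the recurrence `a i * u (i + 1) = (b i + q) * u i - c i * u (i - 1)` with `u 0 = 1`
and `u (-1) = 0` formally in the parameter `q`: as long as `a 0, …, a d` are nonzero, `u n` is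
a polynomial in `q` of degree exactly `n` for `n ≤ d + 1`, with leading coefficient
`∏ i < n, (a i)⁻¹`. Over an algebraically closed field `u (d + 1)` therefore has a root `q`.
For that `q`, the vanishing of `c (d + 1)` decouples `u (d + 2)` from `u d`, so `u` may be cut
off after index `d` without violating the recurrence.
-/

open Polynomial Finset

namespace ThreeTermRecurrence

variable {K : Type*} [Field K] (a b c : ℕ → K)

noncomputable def recPoly : ℕ → K[X]
  | 0 => 1
  | 1 => C (a 0)⁻¹ * (X + C (b 0))
  | n + 2 => C (a (n + 1))⁻¹ *
      ((X + C (b (n + 1))) * recPoly (n + 1) - C (c (n + 1)) * recPoly n)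

theorem natDegree_recPoly_le : ∀ n, (recPoly a b c n).natDegree ≤ n
  | 0 => by simp [recPoly]
  | 1 => (natDegree_C_mul_le _ _).trans (natDegree_X_add_C _).le
  | n + 2 => by
    refine (natDegree_C_mul_le _ _).trans ((natDegree_sub_le_of_le
      (natDegree_mul_le_of_le (natDegree_X_add_C _).le (natDegree_recPoly_le (n + 1)))
      ((natDegree_C_mul_le _ _).trans (natDegree_recPoly_le n))).trans ?_)
    omega

theorem coeff_recPoly_self : ∀ n, (recPoly a b c n).coeff n = ∏ i ∈ range n, (a i)⁻¹
  | 0 => by simp [recPoly]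
  | 1 => by simp [recPoly, coeff_C_mul]
  | n + 2 => by
    have h1 : (recPoly a b c (n + 1)).coeff (n + 2) = 0 :=
      coeff_eq_zero_of_natDegree_lt ((natDegree_recPoly_le a b c _).trans_lt (by omega))
    have h0 : (recPoly a b c n).coeff (n + 2) = 0 :=
      coeff_eq_zero_of_natDegree_lt ((natDegree_recPoly_le a b c _).trans_lt (by omega))
    rw [recPoly, coeff_C_mul, coeff_sub, add_mul, coeff_add, coeff_X_mul, coeff_C_mul,
      coeff_C_mul, h1, h0, coeff_recPoly_self (n + 1), prod_range_succ _ (n + 1)]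
    ring

variable {a}

theorem natDegree_recPoly {n : ℕ} (ha : ∀ i < n, a i ≠ 0) : (recPoly a b c n).natDegree = n :=
  natDegree_eq_of_le_of_coeff_ne_zero (natDegree_recPoly_le a b c n)
    (by
      rw [coeff_recPoly_self]
      exact prod_ne_zero_iff.2 fun i hi ↦ inv_ne_zero (ha i (mem_range.1 hi)))

theorem eval_recPoly_one (ha : a 0 ≠ 0) (q : K) :
    a 0 * (recPoly a b c 1).eval q = (b 0 + q) * (recPoly a b c 0).eval q := by
  simp only [recPoly, eval_mul, eval_C, eval_add, eval_X, eval_one]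
  field_simp
  ring

theorem eval_recPoly_add_two {n : ℕ} (ha : a (n + 1) ≠ 0) (q : K) :
    a (n + 1) * (recPoly a b c (n + 2)).eval q - (b (n + 1) + q) * (recPoly a b c (n + 1)).eval q
      + c (n + 1) * (recPoly a b c n).eval q = 0 := by
  simp only [recPoly, eval_mul, eval_C, eval_sub, eval_add, eval_X]
  field_simp
  ring

theorem exists_truncated_solution [IsAlgClosed K] (d : ℕ) (ha : ∀ i ≤ d, a i ≠ 0)
    (hc : c (d + 1) = 0) :
    ∃ q : K, ∃ u : ℕ → K, u 0 = 1 ∧ a 0 * u 1 = (b 0 + q) * u 0 ∧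
      (∀ i, 1 ≤ i → a i * u (i + 1) - (b i + q) * u i + c i * u (i - 1) = 0) ∧
      ∀ i, d < i → u i = 0 := by
  obtain ⟨q, hq⟩ := IsAlgClosed.exists_root (recPoly a b c (d + 1)) <|
    degree_ne_of_natDegree_ne <| by
      rw [natDegree_recPoly b c fun i hi ↦ ha i (by omega)]
      exact d.succ_ne_zero
  set u : ℕ → K := fun i ↦ if i ≤ d then (recPoly a b c i).eval q else 0
  have hu_trunc : ∀ i, d < i → u i = 0 := fun i hi ↦ if_neg (by omega)
  have hu_eval : ∀ i ≤ d + 1, u i = (recPoly a b c i).eval q := by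
    intro i hi
    rcases hi.lt_or_eq with hi | rfl
    · exact if_pos (by omega)
    · rw [hu_trunc _ (by omega), hq.eq_zero]
  refine ⟨q, u, by simp [u, recPoly], ?_, ?_, hu_trunc⟩
  · rw [hu_eval 0 (by omega), hu_eval 1 (by omega)]
    exact eval_recPoly_one b c (ha 0 d.zero_le) q
  · rintro (_ | n) hn
    · omega
    by_cases hnd : n + 1 ≤ d
    · rw [hu_eval _ (by omega), hu_eval _ (by omega), hu_eval _ (by omega)]
      exact eval_recPoly_add_two b c (ha _ hnd) q
    · have hlast : c (n + 1) * u n = 0 := by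
        by_cases h : n = d
        · rw [h, hc, zero_mul]
        · rw [hu_trunc n (by omega), mul_zero]
      simp only [Nat.add_sub_cancel, hu_trunc (n + 1) (by omega),
        hu_trunc (n + 1 + 1) (by omega), hlast]
      ring

end ThreeTermRecurrence

theorem heun_polynomial_truncation (d : ℕ) (a β γ δ ε : ℂ) (α : ℂ) (hα : α = -(d : ℂ))
    (hA : ∀ i : ℕ, i ≤ d → a * ((i : ℂ) + 1) * ((i : ℂ) + γ) ≠ 0) :
    ∃ q : ℂ, ∃ c : ℕ → ℂ,
      c 0 = 1 ∧
      a * γ * c 1 = q * c 0 ∧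
      (∀ i : ℕ, 1 ≤ i →
          (a * ((i : ℂ) + 1) * ((i : ℂ) + γ)) * c (i + 1)
            - ((i : ℂ) * (((i : ℂ) - 1 + γ) * (a + 1) + a * δ + ε) + q) * c i
            + (((i : ℂ) - 1 + α) * ((i : ℂ) - 1 + β)) * c (i - 1) = 0) ∧
      (∀ i : ℕ, d < i → c i = 0) := by
  obtain ⟨q, c, h0, h1, hrec, htrunc⟩ := ThreeTermRecurrence.exists_truncated_solution
    (b := fun i : ℕ ↦ (i : ℂ) * (((i : ℂ) - 1 + γ) * (a + 1) + a * δ + ε))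
    (c := fun i : ℕ ↦ ((i : ℂ) - 1 + α) * ((i : ℂ) - 1 + β)) d hA
    (by rw [hα]; push_cast; ring)
  refine ⟨q, c, h0, ?_, hrec, htrunc⟩
  simpa using h1
end

section
/- Let ℓ, n be non-negative integers with E determined by ℓ(ℓ+1) = E − λ and n = −(1/2)(1 − 2√(1+E) + √(1+4E−4λ)), where λ is real and 1+4E−4λ ≥ 0, E ≥ −1. Then E = D(D+2) with D = ℓ + n, and consequently λ = D(D+2) − ℓ(ℓ+1) and √(1+4E−4λ) = 2ℓ+1. -/
theorem spherical_energy_quantisation (ℓ n : ℕ) (E lam : ℝ)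
    (hEl : (ℓ : ℝ) * (ℓ + 1) = E - lam)
    (hpos : 1 + 4 * E - 4 * lam ≥ 0) (hE : E ≥ -1)
    (hn : (n : ℝ) = -(1 / 2) * (1 - 2 * Real.sqrt (1 + E) + Real.sqrt (1 + 4 * E - 4 * lam))) :
    E = (ℓ + n : ℕ) * ((ℓ + n : ℕ) + 2)
      ∧ lam = (ℓ + n : ℕ) * ((ℓ + n : ℕ) + 2) - (ℓ : ℝ) * (ℓ + 1)
      ∧ Real.sqrt (1 + 4 * E - 4 * lam) = 2 * ℓ + 1 := by
  have h1 : 1 + 4 * E - 4 * lam = (2 * (ℓ : ℝ) + 1) ^ 2 := by nlinarith [hEl]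
  have hs : Real.sqrt (1 + 4 * E - 4 * lam) = 2 * ℓ + 1 := by
    rw [h1, Real.sqrt_sq (by positivity)]
  have hsqE : Real.sqrt (1 + E) = (n : ℝ) + ℓ + 1 := by
    rw [hs] at hn; linarith
  have h2 : 1 + E = ((n : ℝ) + ℓ + 1) ^ 2 := by
    rw [← hsqE, Real.sq_sqrt (by linarith)]
  have hEeq : E = (ℓ + n : ℕ) * ((ℓ + n : ℕ) + 2) := by
    push_cast; nlinarith [h2]
  exact ⟨hEeq, by linarith, hs⟩
end

section
/- Let m and ℓ be integers with 0 ≤ m ≤ ℓ. Define P_ℓ^m(x) = ((−1)^m / (2^ℓ ℓ!)) (1−x²)^{m/2} d^{ℓ+m}/dx^{ℓ+m} (x²−1)^ℓ. Then for x₁,x₂,x₃ ∈ ℝ with r² = x₁²+x₂²+x₃² > 0, the function r^ℓ (x₂ + i x₃)^m (x₂²+x₃²)^{−m/2} P_ℓ^m(x₁/r) is a homogeneous polynomial of degree ℓ in (x₁,x₂,x₃). -/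
/-!
`q = D^{ℓ+m} (X² - 1)^ℓ` has degree `≤ ℓ - m` and only monomials `X^k` with `k ≡ ℓ - m (mod 2)`,
so `r^{ℓ-m} q(x₁/r) = ∑ qₖ x₁^k (r²)^{(ℓ-m-k)/2}` is a homogeneous polynomial of degree `ℓ - m`
once `r²` is replaced by `x₁² + x₂² + x₃²`. The factor `(1 - (x₁/r)²)^{m/2}` of `P_ℓ^m(x₁/r)` equals
`√(x₂² + x₃²) / r`, whose numerator is `|x₂ + i x₃|` and cancels against the denominator, leaving
`(x₂ + i x₃)^m r^{ℓ-m} q(x₁/r)`.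
-/

open MvPolynomial Complex

/-- The associated Legendre function `P_ℓ^m`, defined by the Rodrigues-type formula. -/
noncomputable def assocLegendre (ℓ m : ℕ) (t : ℝ) : ℝ :=
  ((-1 : ℝ) ^ m / (2 ^ ℓ * Nat.factorial ℓ)) * (Real.sqrt (1 - t ^ 2)) ^ m
    * iteratedDeriv (ℓ + m) (fun s : ℝ => (s ^ 2 - 1) ^ ℓ) t

theorem Polynomial.iteratedDeriv_eval {𝕜 : Type*} [NontriviallyNormedField 𝕜]
    (p : Polynomial 𝕜) (n : ℕ) :
    iteratedDeriv n (fun x => p.eval x) = fun x => (Polynomial.derivative^[n] p).eval x := by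
  induction n with
  | zero => simp
  | succ n ih =>
    funext x
    rw [iteratedDeriv_succ, ih, Function.iterate_succ_apply']
    exact Polynomial.deriv _

section Rodrigues

open Polynomial

variable (R : Type*) [CommRing R]

noncomputable def rodriguesPoly (ℓ m : ℕ) : R[X] :=
  derivative^[ℓ + m] ((Polynomial.X ^ 2 - 1) ^ ℓ)

theorem rodriguesPoly_natDegree_le (ℓ m : ℕ) : (rodriguesPoly R ℓ m).natDegree ≤ ℓ - m := by
  have h : ((Polynomial.X ^ 2 - 1 : R[X]) ^ ℓ).natDegree ≤ 2 * ℓ := by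
    compute_degree
    omega
  exact (natDegree_iterate_derivative _ _).trans (by omega)

theorem even_of_rodriguesPoly_coeff_ne_zero {ℓ m k : ℕ} (hm : m ≤ ℓ)
    (h : (rodriguesPoly R ℓ m).coeff k ≠ 0) : Even (ℓ - m + k) := by
  have hexpand : (Polynomial.X ^ 2 - 1 : R[X]) ^ ℓ = expand R 2 ((Polynomial.X - 1) ^ ℓ) := by
    simp
  rw [rodriguesPoly, coeff_iterate_derivative, hexpand, coeff_expand two_pos] at h
  have h2 : 2 ∣ k + (ℓ + m) := by
    by_contra h2
    simp [h2] at h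
  rw [even_iff_two_dvd]
  omega

variable {R}

theorem rodriguesPoly_map {S : Type*} [CommRing S] (f : R →+* S) (ℓ m : ℕ) :
    (rodriguesPoly R ℓ m).map f = rodriguesPoly S ℓ m := by
  simp [rodriguesPoly, ← iterate_derivative_map]

@[norm_cast]
theorem ofReal_eval_rodriguesPoly (ℓ m : ℕ) (x : ℝ) :
    (((rodriguesPoly ℝ ℓ m).eval x : ℝ) : ℂ) = (rodriguesPoly ℂ ℓ m).eval (x : ℂ) := by
  rw [← rodriguesPoly_map ofRealHom, Polynomial.eval_map]
  exact (eval₂_hom ofRealHom x).symm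

end Rodrigues

theorem assocLegendre_eq (ℓ m : ℕ) (t : ℝ) :
    assocLegendre ℓ m t = (-1) ^ m / (2 ^ ℓ * ℓ.factorial) * √(1 - t ^ 2) ^ m
      * (rodriguesPoly ℝ ℓ m).eval t := by
  have h : (fun s : ℝ => (s ^ 2 - 1) ^ ℓ)
      = fun s => ((Polynomial.X ^ 2 - 1 : Polynomial ℝ) ^ ℓ).eval s := by
    simp
  rw [assocLegendre, h, Polynomial.iteratedDeriv_eval]
  rfl

theorem Real.sqrt_one_sub_sq_div_sqrt {x y R : ℝ} (hR : 0 < R) (h : x ^ 2 + y = R) :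
    √(1 - (x / √R) ^ 2) = √y / √R := by
  have h1 : 1 - (x / √R) ^ 2 = y / R := by
    rw [div_pow, Real.sq_sqrt hR.le]
    field_simp
    linarith
  rw [h1, Real.sqrt_div' _ hR.le]

namespace MvPolynomial

variable {σ R : Type*} [CommRing R]

/-- `r^n p(a / r)` for `b = r²`, expanded without `r`; the expansion is exact when `p` has degree
`≤ n` and only monomials of the parity of `n`. -/
noncomputable def homogenizeSq (p : Polynomial R) (n : ℕ) (a b : MvPolynomial σ R) :
    MvPolynomial σ R :=
  ∑ k ∈ Finset.range (n + 1), C (p.coeff k) * a ^ k * b ^ ((n - k) / 2)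

theorem isHomogeneous_homogenizeSq {p : Polynomial R} {n : ℕ} {a b : MvPolynomial σ R}
    (hp : ∀ k, p.coeff k ≠ 0 → Even (n + k)) (ha : a.IsHomogeneous 1) (hb : b.IsHomogeneous 2) :
    (homogenizeSq p n a b).IsHomogeneous n := by
  refine IsHomogeneous.sum _ _ _ fun k hk => ?_
  by_cases hk0 : p.coeff k = 0
  · simp [hk0, isHomogeneous_zero]
  have hdeg : 0 + 1 * k + 2 * ((n - k) / 2) = n := by
    have := hp k hk0
    rw [Finset.mem_range] at hk
    rw [Nat.even_iff] at this
    omega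
  have hterm := ((isHomogeneous_C σ (p.coeff k)).mul (ha.pow k)).mul (hb.pow ((n - k) / 2))
  rwa [hdeg] at hterm

theorem eval_homogenizeSq {K : Type*} [Field K] {p : Polynomial K} {n : ℕ}
    (hp : ∀ k, p.coeff k ≠ 0 → Even (n + k)) (hdeg : p.natDegree ≤ n) (a b : MvPolynomial σ K)
    (f : σ → K) {r : K} (hr : r ≠ 0) (hb : eval f b = r ^ 2) :
    eval f (homogenizeSq p n a b) = r ^ n * p.eval (eval f a / r) := by
  rw [homogenizeSq, p.eval_eq_sum_range' (Nat.lt_succ_of_le hdeg), Finset.mul_sum, map_sum]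
  refine Finset.sum_congr rfl fun k _ => ?_
  by_cases hk0 : p.coeff k = 0
  · simp [hk0]
  have hsplit : r ^ n = r ^ k * (r ^ 2) ^ ((n - k) / 2) := by
    have := hp k hk0
    have := (Polynomial.le_natDegree_of_ne_zero hk0).trans hdeg
    rw [Nat.even_iff] at *
    rw [← pow_mul, ← pow_add]
    congr 1
    omega
  simp only [map_mul, map_pow, eval_C, hb, hsplit, div_pow]
  field_simp

end MvPolynomial

noncomputable def solidHarmonic (ℓ m : ℕ) : MvPolynomial (Fin 3) ℂ :=
  C ((-1) ^ m / (2 ^ ℓ * ℓ.factorial) : ℂ) * (X 1 + C I * X 2) ^ m *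
    homogenizeSq (rodriguesPoly ℂ ℓ m) (ℓ - m) (X 0) (X 0 ^ 2 + X 1 ^ 2 + X 2 ^ 2)

theorem isHomogeneous_solidHarmonic {ℓ m : ℕ} (hm : m ≤ ℓ) :
    (solidHarmonic ℓ m).IsHomogeneous ℓ := by
  have hρ : (X 0 ^ 2 + X 1 ^ 2 + X 2 ^ 2 : MvPolynomial (Fin 3) ℂ).IsHomogeneous 2 :=
    ((isHomogeneous_X_pow _ _).add (isHomogeneous_X_pow _ _)).add (isHomogeneous_X_pow _ _)
  have hw : (X 1 + C I * X 2 : MvPolynomial (Fin 3) ℂ).IsHomogeneous 1 :=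
    (isHomogeneous_X _ _).add (isHomogeneous_C_mul_X _ _)
  rw [solidHarmonic]
  convert ((isHomogeneous_C _ _).mul (hw.pow m)).mul (isHomogeneous_homogenizeSq
    (fun _ => even_of_rodriguesPoly_coeff_ne_zero ℂ hm) (isHomogeneous_X _ 0) hρ) using 1
  omega

theorem eval_solidHarmonic {ℓ m : ℕ} (hm : m ≤ ℓ) (x : Fin 3 → ℂ) {r : ℂ} (hr : r ≠ 0)
    (hx : x 0 ^ 2 + x 1 ^ 2 + x 2 ^ 2 = r ^ 2) :
    eval x (solidHarmonic ℓ m) = (-1) ^ m / (2 ^ ℓ * ℓ.factorial) * (x 1 + I * x 2) ^ m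
      * r ^ (ℓ - m) * (rodriguesPoly ℂ ℓ m).eval (x 0 / r) := by
  have hρ : eval x (X 0 ^ 2 + X 1 ^ 2 + X 2 ^ 2) = r ^ 2 := by simpa using hx
  simp only [solidHarmonic, map_mul, map_pow, map_add, eval_C, eval_X,
    eval_homogenizeSq (fun _ => even_of_rodriguesPoly_coeff_ne_zero ℂ hm)
      (rodriguesPoly_natDegree_le ℂ ℓ m) _ _ _ hr hρ]
  ring

theorem solid_spherical_harmonic_polynomial (ℓ m : ℕ) (hm : m ≤ ℓ) :
    ∃ P : MvPolynomial (Fin 3) ℂ, P.IsHomogeneous ℓ ∧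
      ∀ x₁ x₂ x₃ : ℝ, x₁ ^ 2 + x₂ ^ 2 + x₃ ^ 2 > 0 →
        eval (fun i => (![ (x₁ : ℂ), (x₂ : ℂ), (x₃ : ℂ)] i)) P
          = (Real.sqrt (x₁ ^ 2 + x₂ ^ 2 + x₃ ^ 2) : ℂ) ^ ℓ
              * ((x₂ : ℂ) + Complex.I * (x₃ : ℂ)) ^ m
              / ((Real.sqrt (x₂ ^ 2 + x₃ ^ 2) : ℂ)) ^ m
              * (assocLegendre ℓ m (x₁ / Real.sqrt (x₁ ^ 2 + x₂ ^ 2 + x₃ ^ 2)) : ℂ) := by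
  refine ⟨solidHarmonic ℓ m, isHomogeneous_solidHarmonic hm, fun x₁ x₂ x₃ hpos => ?_⟩
  set r := √(x₁ ^ 2 + x₂ ^ 2 + x₃ ^ 2)
  set s := √(x₂ ^ 2 + x₃ ^ 2)
  set w : ℂ := x₂ + I * x₃
  have hr : (r : ℂ) ≠ 0 := ofReal_ne_zero.mpr (Real.sqrt_pos.mpr hpos).ne'
  have hr2 : (x₁ : ℂ) ^ 2 + (x₂ : ℂ) ^ 2 + (x₃ : ℂ) ^ 2 = (r : ℂ) ^ 2 := by
    exact_mod_cast (Real.sq_sqrt hpos.le).symm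
  have hsw : (s : ℂ) ^ m = 0 → w ^ m = 0 := fun h => by
    rw [← norm_eq_zero, norm_pow, show w = x₂ + x₃ * I by ring, norm_add_mul_I]
    exact_mod_cast h
  rw [eval_solidHarmonic hm (fun i => ![(x₁ : ℂ), (x₂ : ℂ), (x₃ : ℂ)] i) hr hr2,
    assocLegendre_eq, Real.sqrt_one_sub_sq_div_sqrt (y := x₂ ^ 2 + x₃ ^ 2) hpos (by ring)]
  push_cast
  set c : ℂ := (-1) ^ m / (2 ^ ℓ * ℓ.factorial)
  set Q := (rodriguesPoly ℂ ℓ m).eval (x₁ / r : ℂ)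
  change c * w ^ m * (r : ℂ) ^ (ℓ - m) * Q
    = (r : ℂ) ^ ℓ * w ^ m / (s : ℂ) ^ m * (c * (s / r : ℂ) ^ m * Q)
  calc c * w ^ m * (r : ℂ) ^ (ℓ - m) * Q
      -- `s = |w|`, so `w ^ m / s ^ m * s ^ m = w ^ m` also when `s = 0`
      = c * (w ^ m / (s : ℂ) ^ m * (s : ℂ) ^ m) * ((r : ℂ) ^ ℓ * ((r : ℂ) ^ m)⁻¹) * Q := by
        rw [div_mul_cancel_of_imp hsw, ← pow_sub₀ _ hr hm]
    _ = (r : ℂ) ^ ℓ * w ^ m / (s : ℂ) ^ m * (c * (s / r : ℂ) ^ m * Q) := by ring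
end
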